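/- Let $K$ be a nonempty compact nowhere dense subset of $\mathbb{R}$ with $\min K = 0$ and $\max K = 1$, and let $\mathcal{I}(K)$ be the linearly ordered set of connected components of $[0,1] \setminus K$ (ordered by their position in $\mathbb{R}$). Then the set of cuts $\mathcal{C}(\mathcal{I}(K))$ is order-isomorphic to $K$. -/

import Mathlib

/-- A cut of a set with a relation `r`: a pair `(A, B)` of disjoint sets with union
everything such that `r a b` holds for all `a ∈ A`, `b ∈ B`. -/
structure Cut (L : Type*) (r : L → L → Prop) where
  A : Set L
  B : Set L
  disj : Disjoint A B
  union : A ∪ B = Set.univ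
  sep : ∀ a ∈ A, ∀ b ∈ B, r a b

/-- Cuts are ordered by inclusion of first coordinates. -/
instance {L : Type*} {r : L → L → Prop} : LE (Cut L r) := ⟨fun c d => c.A ⊆ d.A⟩

/-- The linearly ordered set of connected components of `[0,1] \ K`. -/
def CompType (K : Set ℝ) : Type :=
  {C : Set ℝ // ∃ x ∈ Set.Icc (0:ℝ) 1 \ K, C = connectedComponentIn (Set.Icc (0:ℝ) 1 \ K) x}

/-- The pointwise order relation on components: every point of `C` is `≤` every point
of `D`. -/
def compLE (K : Set ℝ) (C D : CompType K) : Prop := ∀ a ∈ C.1, ∀ b ∈ D.1, a ≤ b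


/-!
A point `k ∈ K` determines the cut whose lower part consists of the components lying
to the left of `k`. Nowhere density puts a component between any two points of `K`,
so distinct points give distinct cuts. Conversely, the supremum `k` of the union of the
lower part of a cut lies in `K`: otherwise `k` would be interior to an open component,
which could lie neither on the lower side (it has points above `k`) nor on the upper
side (it has points below `k`).
-/

open Set Topology

namespace Cut

variable {L : Type*} {r : L → L → Prop}

theorem B_eq_compl (c : Cut L r) : c.B = c.Aᶜ :=
  (IsCompl.of_eq c.disj.eq_bot c.union).compl_eq.symm

theorem A_injective : Function.Injective (Cut.A : Cut L r → Set L) := by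
  intro c d h
  have hB : c.B = d.B := by rw [c.B_eq_compl, d.B_eq_compl, h]
  obtain ⟨A, B, _, _, _⟩ := c
  obtain ⟨A', B', _, _, _⟩ := d
  dsimp only at h hB
  subst h hB
  rfl

def ofSet (A : Set L) (h : ∀ a ∈ A, ∀ b ∉ A, r a b) : Cut L r :=
  ⟨A, Aᶜ, disjoint_compl_right, union_compl_self A, h⟩

end Cut

theorem Set.OrdConnected.subset_Iio_or_subset_Ioi {α : Type*} [LinearOrder α] {s : Set α}
    (hs : s.OrdConnected) {k : α} (hk : k ∉ s) : s ⊆ Iio k ∨ s ⊆ Ioi k := by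
  by_contra! h
  obtain ⟨a, has, hka⟩ := not_subset.1 h.1
  obtain ⟨b, hbs, hbk⟩ := not_subset.1 h.2
  exact hk (hs.out hbs has ⟨not_lt.1 hbk, not_lt.1 hka⟩)

theorem IsNowhereDense.exists_mem_Ioo_notMem {α : Type*} [TopologicalSpace α] [LinearOrder α]
    [OrderClosedTopology α] [DenselyOrdered α] {K : Set α} (hK : IsNowhereDense K) {a b : α}
    (hab : a < b) : ∃ x ∈ Ioo a b, x ∉ K := by
  have hdense : Dense (closure K)ᶜ := interior_eq_empty_iff_dense_compl.1 hK
  obtain ⟨x, hx, hxab⟩ := hdense.exists_between hab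
  exact ⟨x, hxab, fun hxK => hx (subset_closure hxK)⟩

theorem isOpen_Icc_sdiff {K : Set ℝ} (hK : IsClosed K) (h0 : (0 : ℝ) ∈ K)
    (h1 : (1 : ℝ) ∈ K) : IsOpen (Icc 0 1 \ K) := by
  have h01 : {0, 1} ⊆ K := insert_subset h0 (singleton_subset_iff.2 h1)
  rw [← union_eq_right.2 h01, ← sdiff_sdiff, Icc_sdiff_both]
  exact isOpen_Ioo.sdiff hK

namespace CompType

variable {K : Set ℝ}

def of {x : ℝ} (hx : x ∈ Icc 0 1 \ K) : CompType K :=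
  ⟨connectedComponentIn (Icc 0 1 \ K) x, x, hx, rfl⟩

theorem mem_of {x : ℝ} (hx : x ∈ Icc 0 1 \ K) : x ∈ (of hx).1 :=
  mem_connectedComponentIn hx

theorem subset (C : CompType K) : C.1 ⊆ Icc 0 1 \ K := by
  obtain ⟨x, -, hC⟩ := C.2
  exact hC ▸ connectedComponentIn_subset _ _

theorem notMem {C : CompType K} {x : ℝ} (hx : x ∈ K) : x ∉ C.1 :=
  fun hxC => (C.subset hxC).2 hx

theorem nonempty (C : CompType K) : C.1.Nonempty := by
  obtain ⟨x, hx, hC⟩ := C.2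
  exact ⟨x, hC ▸ mem_connectedComponentIn hx⟩

theorem ordConnected (C : CompType K) : C.1.OrdConnected := by
  obtain ⟨x, -, hC⟩ := C.2
  exact hC ▸ isPreconnected_connectedComponentIn.ordConnected

theorem subset_Iio_or_subset_Ioi (C : CompType K) {k : ℝ} (hk : k ∈ K) :
    C.1 ⊆ Iio k ∨ C.1 ⊆ Ioi k :=
  C.ordConnected.subset_Iio_or_subset_Ioi (notMem hk)

theorem isOpen (hK : IsClosed K) (h0 : (0 : ℝ) ∈ K) (h1 : (1 : ℝ) ∈ K) (C : CompType K) :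
    IsOpen C.1 := by
  obtain ⟨x, -, hC⟩ := C.2
  exact hC ▸ (isOpen_Icc_sdiff hK h0 h1).connectedComponentIn

end CompType

section LowerCut

variable {K : Set ℝ}

def lowerCut (k : K) : Cut (CompType K) (compLE K) :=
  Cut.ofSet {C | C.1 ⊆ Iic (k : ℝ)} fun _ hC D hD _ ha _ hb =>
    have hDk : D.1 ⊆ Ioi (k : ℝ) := (D.subset_Iio_or_subset_Ioi k.2).resolve_left
      fun h => hD (h.trans Iio_subset_Iic_self)
    (hC ha).trans (hDk hb).le

theorem mem_lowerCut {k : K} {C : CompType K} : C ∈ (lowerCut k).A ↔ C.1 ⊆ Iic (k : ℝ) :=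
  Iff.rfl

theorem mem_lowerCut_of_lt {k : K} {C : CompType K} {x : ℝ} (hx : x ∈ C.1) (hxk : x < k) :
    C ∈ (lowerCut k).A :=
  ((C.subset_Iio_or_subset_Ioi k.2).resolve_right fun h => lt_asymm (h hx) hxk).trans
    Iio_subset_Iic_self

theorem lowerCut_le_lowerCut_iff (hnd : IsNowhereDense K) (hsub : K ⊆ Icc 0 1) {k k' : K} :
    lowerCut k ≤ lowerCut k' ↔ k ≤ k' := by
  refine ⟨fun h => ?_, fun h C hC => mem_lowerCut.2 (hC.trans (Iic_subset_Iic.2 h))⟩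
  by_contra! hlt
  obtain ⟨x, ⟨hk'x, hxk⟩, hxK⟩ := hnd.exists_mem_Ioo_notMem hlt
  have hxU : x ∈ Icc 0 1 \ K :=
    ⟨⟨(hsub k'.2).1.trans hk'x.le, hxk.le.trans (hsub k.2).2⟩, hxK⟩
  have hCk := mem_lowerCut_of_lt (CompType.mem_of hxU) hxk
  exact (mem_Iic.1 (h hCk (CompType.mem_of hxU))).not_gt hk'x

theorem lowerCut_injective (hnd : IsNowhereDense K) (hsub : K ⊆ Icc 0 1) :
    Function.Injective (lowerCut (K := K)) := by
  intro k k' h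
  have hA : (lowerCut k).A = (lowerCut k').A := congrArg Cut.A h
  exact le_antisymm ((lowerCut_le_lowerCut_iff hnd hsub).1 hA.subset)
    ((lowerCut_le_lowerCut_iff hnd hsub).1 hA.symm.subset)

def lowerPoints (c : Cut (CompType K) (compLE K)) : Set ℝ :=
  insert 0 (⋃ C ∈ c.A, (C : CompType K).1)

noncomputable def cutPoint (c : Cut (CompType K) (compLE K)) : ℝ :=
  sSup (lowerPoints c)

section CutPoint

variable (c : Cut (CompType K) (compLE K))

theorem lowerPoints_subset_Icc : lowerPoints c ⊆ Icc 0 1 := by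
  rintro t (rfl | ht)
  · exact left_mem_Icc.2 zero_le_one
  · obtain ⟨C, -, htC⟩ := mem_iUnion₂.1 ht
    exact (C.subset htC).1

theorem cutPoint_mem_Icc : cutPoint c ∈ Icc 0 1 :=
  ⟨le_csSup (bddAbove_Icc.mono (lowerPoints_subset_Icc c)) (mem_insert 0 _),
    csSup_le (insert_nonempty _ _) fun _ ht => (lowerPoints_subset_Icc c ht).2⟩

theorem subset_Iic_cutPoint {C : CompType K} (hC : C ∈ c.A) : C.1 ⊆ Iic (cutPoint c) :=
  fun _ ha => le_csSup (bddAbove_Icc.mono (lowerPoints_subset_Icc c))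
    (mem_insert_of_mem _ (mem_biUnion hC ha))

theorem cutPoint_le {D : CompType K} (hD : D ∈ c.B) {b : ℝ} (hb : b ∈ D.1) :
    cutPoint c ≤ b := by
  refine csSup_le (insert_nonempty _ _) ?_
  rintro t (rfl | ht)
  · exact (D.subset hb).1.1
  · obtain ⟨C, hC, htC⟩ := mem_iUnion₂.1 ht
    exact c.sep C hC D hD t htC b hb

theorem cutPoint_mem (hK : IsClosed K) (h0 : (0 : ℝ) ∈ K) (h1 : (1 : ℝ) ∈ K) :
    cutPoint c ∈ K := by
  by_contra hkK
  have hkU : cutPoint c ∈ Icc 0 1 \ K := ⟨cutPoint_mem_Icc c, hkK⟩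
  have hD : ∀ᶠ x in 𝓝 (cutPoint c), x ∈ (CompType.of hkU).1 :=
    (CompType.isOpen hK h0 h1 _).mem_nhds (CompType.mem_of hkU)
  rcases (c.union ▸ mem_univ _ : CompType.of hkU ∈ c.A ∪ c.B) with hA | hB
  · obtain ⟨b, hkb, hb⟩ := hD.exists_gt
    exact (subset_Iic_cutPoint c hA hb).not_gt hkb
  · obtain ⟨a, hak, ha⟩ := hD.exists_lt
    exact (cutPoint_le c hB ha).not_gt hak

theorem lowerCut_cutPoint (hK : IsClosed K) (h0 : (0 : ℝ) ∈ K) (h1 : (1 : ℝ) ∈ K) :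
    lowerCut ⟨cutPoint c, cutPoint_mem c hK h0 h1⟩ = c := by
  refine Cut.A_injective (Subset.antisymm (fun C hC => ?_) fun C => subset_Iic_cutPoint c)
  by_contra hCA
  obtain ⟨b, hb⟩ := C.nonempty
  have hbk : b = cutPoint c := le_antisymm (hC hb) (cutPoint_le c (c.B_eq_compl ▸ hCA) hb)
  exact CompType.notMem (cutPoint_mem c hK h0 h1) (hbk ▸ hb)

end CutPoint

theorem lowerCut_surjective (hK : IsClosed K) (h0 : (0 : ℝ) ∈ K) (h1 : (1 : ℝ) ∈ K) :
    Function.Surjective (lowerCut (K := K)) :=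
  fun c => ⟨_, lowerCut_cutPoint c hK h0 h1⟩

end LowerCut

theorem cuts_of_components_orderIso_general (K : Set ℝ) (hK : IsCompact K)
    (hnd : IsNowhereDense K) (hsub : K ⊆ Set.Icc 0 1) (h0 : (0:ℝ) ∈ K) (h1 : (1:ℝ) ∈ K) :
    Nonempty (Cut (CompType K) (compLE K) ≃o K) :=
  ⟨(RelIso.mk (Equiv.ofBijective lowerCut
    ⟨lowerCut_injective hnd hsub, lowerCut_surjective hK.isClosed h0 h1⟩)
    (lowerCut_le_lowerCut_iff hnd hsub)).symm⟩

/-- If `K` is a nonempty compact nowhere dense subset of `ℝ` with `min K = 0` and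
`max K = 1`, then the set of cuts of the ordered set of components of `[0,1] \ K` is
order-isomorphic to `K`. -/
theorem cuts_of_components_orderIso (K : Set ℝ) (hne : K.Nonempty) (hK : IsCompact K)
    (hnd : IsNowhereDense K) (hsub : K ⊆ Set.Icc 0 1) (h0 : (0:ℝ) ∈ K) (h1 : (1:ℝ) ∈ K) :
    Nonempty (Cut (CompType K) (compLE K) ≃o K) :=
  cuts_of_components_orderIso_general K hK hnd hsub h0 h1
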